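/- Let (a_m)_{m=-ℓ..ℓ} be independent complex Gaussians with a_{-m} = (-1)^m a_m*, E|a_m|² = C_{ℓ,m} (with C_{ℓ,m}=C_{ℓ,-m}), a_0 real. Suppose all the power is in the m = 0 mode: C_{ℓ,m} = 0 for m ≠ 0 and C_{ℓ,0} = (2ℓ+1)C_ℓ. Then the observed power C^ℓ = (1/(2ℓ+1)) Σ_m |a_m|² is distributed as C_ℓ times a χ² random variable with 1 degree of freedom, and its variance equals 2(2ℓ+1) C_ℓ², i.e. A_ℓ = 2ℓ+1 times the isotropic Gaussian cosmic variance. -/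

import Mathlib

open MeasureTheory ProbabilityTheory Finset

/-- The chi-squared distribution with one degree of freedom: the law of the square
of a standard real Gaussian. -/
noncomputable def chiSqOne : Measure ℝ :=
  (ProbabilityTheory.gaussianReal 0 1).map (fun t : ℝ => t ^ 2)

/-! Only the zonal mode contributes, so `C^ℓ = a₀² / (2ℓ+1)` and `C^ℓ / C_ℓ = a₀² / C_{ℓ,0}` is
the square of a standard Gaussian. Its variance is `C_ℓ² (E a₀⁴ - (E a₀²)²) / C_{ℓ,0}² = 2 C_ℓ²`,
with the Gaussian moments `E X^{2k} = v^k (2k-1)‼` obtained from `Γ(k + 1/2) = (2k-1)‼ √π / 2^k`. -/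

open Real
open scoped NNReal Nat

theorem integral_pow_two_mul_mul_exp_neg_mul_sq {b : ℝ} (hb : 0 < b) (k : ℕ) :
    ∫ x : ℝ, x ^ (2 * k) * exp (-b * x ^ 2) = (2 * k - 1 : ℕ)‼ * √(π / b) / (2 * b) ^ k := by
  have hΓ := integral_rpow_mul_exp_neg_mul_rpow two_pos
    (neg_one_lt_zero.trans_le (Nat.cast_nonneg (2 * k))) hb
  have hexp : (((2 * k : ℕ) : ℝ) + 1) / 2 = k + 1 / 2 := by push_cast; ring
  have hb_rpow : b ^ (-(((2 * k : ℕ) : ℝ) + 1) / 2) = (b ^ k * √b)⁻¹ := by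
    rw [neg_div, hexp, rpow_neg hb.le, rpow_add hb, rpow_natCast, sqrt_eq_rpow, one_div]
  simp only [rpow_natCast, rpow_two, hexp, Gamma_nat_add_half, hb_rpow] at hΓ
  have heven : ∀ x : ℝ, |x| ^ (2 * k) = x ^ (2 * k) := fun x ↦ by rw [pow_mul, sq_abs, pow_mul]
  calc ∫ x : ℝ, x ^ (2 * k) * exp (-b * x ^ 2)
      = ∫ x : ℝ, |x| ^ (2 * k) * exp (-b * |x| ^ 2) := by simp only [heven, sq_abs]
    _ = 2 * ∫ x in Set.Ioi 0, x ^ (2 * k) * exp (-b * x ^ 2) :=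
        integral_comp_abs (f := fun x ↦ x ^ (2 * k) * exp (-b * x ^ 2))
    _ = (2 * k - 1 : ℕ)‼ * √(π / b) / (2 * b) ^ k := by
      rw [hΓ, sqrt_div' _ hb.le, mul_pow]
      field_simp

theorem integral_pow_two_mul_gaussianReal (v : ℝ≥0) (k : ℕ) :
    ∫ x, x ^ (2 * k) ∂gaussianReal 0 v = v ^ k * (2 * k - 1 : ℕ)‼ := by
  rcases eq_or_ne v 0 with rfl | hv
  · cases k <;> simp [gaussianReal_zero_var]
  calc ∫ x, x ^ (2 * k) ∂gaussianReal 0 v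
      = (√(2 * π * v))⁻¹ * ∫ x : ℝ, x ^ (2 * k) * exp (-(2 * (v : ℝ))⁻¹ * x ^ 2) := by
        rw [integral_gaussianReal_eq_integral_smul hv, ← integral_const_mul]
        congr with x
        rw [gaussianPDFReal, smul_eq_mul, sub_zero, neg_div, div_eq_inv_mul, neg_mul]
        ring
    _ = v ^ k * (2 * k - 1 : ℕ)‼ := by
      rw [integral_pow_two_mul_mul_exp_neg_mul_sq (by positivity), div_inv_eq_mul,
        show π * (2 * v) = 2 * π * v by ring, show 2 * (2 * (v : ℝ))⁻¹ = (v : ℝ)⁻¹ by field_simp]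
      have : √(2 * π * v) ≠ 0 := by positivity
      field_simp
      rw [one_div, inv_pow, inv_mul_cancel₀ (by positivity)]

theorem variance_sq_gaussianReal (v : ℝ≥0) :
    Var[fun x ↦ x ^ 2; gaussianReal 0 v] = 2 * v ^ 2 := by
  have hL2 : MemLp (fun x : ℝ ↦ x ^ 2) 2 (gaussianReal 0 v) := by
    rw [memLp_two_iff_integrable_sq (by fun_prop)]
    simpa [← pow_mul, Even.pow_abs ⟨2, rfl⟩] using
      (memLp_id_gaussianReal (μ := 0) (v := v) 4).integrable_norm_pow' (p := 4)
  rw [variance_eq_sub hL2]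
  have h4 : ∫ x, (x ^ 2) ^ 2 ∂gaussianReal 0 v = 3 * v ^ 2 := by
    simpa [← pow_mul, Nat.doubleFactorial, mul_comm] using integral_pow_two_mul_gaussianReal v 2
  have h2 : ∫ x, x ^ 2 ∂gaussianReal 0 v = v := by
    simpa using integral_pow_two_mul_gaussianReal v 1
  simp only [Pi.pow_apply, h4, h2]
  ring

theorem gaussianReal_map_sq_div {v : ℝ≥0} (hv : v ≠ 0) :
    (gaussianReal 0 v).map (fun x ↦ x ^ 2 / (v : ℝ)) = chiSqOne := by
  have hstd : (gaussianReal 0 v).map ((√(v : ℝ))⁻¹ * ·) = gaussianReal 0 1 := by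
    rw [gaussianReal_map_const_mul, mul_zero]
    congr
    ext
    simp [inv_pow, inv_mul_cancel₀ (NNReal.coe_ne_zero.2 hv)]
  have hcomp : (fun x : ℝ ↦ x ^ 2 / v) = (fun t ↦ t ^ 2) ∘ ((√(v : ℝ))⁻¹ * ·) := by
    ext x
    simp [mul_pow, inv_pow, div_eq_inv_mul]
  rw [hcomp, ← Measure.map_map (by fun_prop) (by fun_prop), hstd, chiSqOne]

/-- Zonal power concentration: if all the power on multipole `ℓ` is in the `m = 0`
mode, with `a^ℓ_0` real Gaussian of variance `C_{ℓ,0} = (2ℓ+1)C_ℓ` and `a^ℓ_m = 0`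
for `m ≠ 0`, then the observed power `C^ℓ = (1/(2ℓ+1)) Σ_m |a^ℓ_m|²` is `C_ℓ`
times a `χ²₁` variable, and its variance is `2ℓ+1` times the isotropic Gaussian
cosmic variance `2C_ℓ²/(2ℓ+1)`. -/
theorem zonal_power_chiSqOne {Ω : Type*} [MeasurableSpace Ω]
    (μ : Measure Ω) [IsProbabilityMeasure μ] (ℓ : ℕ) (Cl : NNReal) (hCl : 0 < Cl)
    (a0 : Ω → ℝ) (ha0 : μ.map a0 = gaussianReal 0 ((2 * ℓ + 1) * Cl))
    (a : ℤ → Ω → ℂ)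
    (haz : ∀ ω, a 0 ω = (a0 ω : ℂ))
    (hzero : ∀ m ∈ Finset.Icc (-(ℓ : ℤ)) ℓ, m ≠ 0 → ∀ ω, a m ω = 0)
    (Cobs : Ω → ℝ)
    (hCobs : ∀ ω, Cobs ω
      = (1 / (2 * (ℓ : ℝ) + 1)) * ∑ m ∈ Finset.Icc (-(ℓ : ℤ)) ℓ, ‖a m ω‖ ^ 2) :
    μ.map (fun ω => Cobs ω / (Cl : ℝ)) = chiSqOne ∧
    ProbabilityTheory.variance Cobs μ = (2 * (ℓ : ℝ) + 1) * (2 * (Cl : ℝ) ^ 2 / (2 * (ℓ : ℝ) + 1)) := by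
  have ha0m : AEMeasurable a0 μ := aemeasurable_of_map_neZero (by rw [ha0]; infer_instance)
  have hCobs_eq : Cobs = fun ω ↦ (2 * (ℓ : ℝ) + 1)⁻¹ * a0 ω ^ 2 := by
    ext ω
    rw [hCobs, sum_eq_single_of_mem 0 (by simp) fun m hm hm0 ↦ by simp [hzero m hm hm0], haz,
      Complex.norm_real, norm_eq_abs, sq_abs, one_div]
  constructor
  · have hscale : (fun ω ↦ Cobs ω / Cl)
        = (fun x : ℝ ↦ x ^ 2 / ((2 * ℓ + 1) * Cl : ℝ≥0)) ∘ a0 := by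
      ext ω
      simp only [hCobs_eq, Function.comp_apply, NNReal.coe_mul]
      push_cast
      field_simp
    rw [hscale, ← AEMeasurable.map_map_of_aemeasurable (by fun_prop) ha0m, ha0,
      gaussianReal_map_sq_div (mul_ne_zero (by positivity) hCl.ne')]
  · rw [hCobs_eq, variance_const_mul, ← Function.comp_def (fun x : ℝ ↦ x ^ 2),
      ← variance_map (by fun_prop) ha0m, ha0, variance_sq_gaussianReal]
    push_cast
    field_simp
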